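/- arXiv:2305.05878 — 2 statements merged into one kernel-verified Lean document; each statement's English description precedes it below -/
import Mathlib

section
/- Let G be a simple graph of order n > 1 and size m, and let Ḡ denote its complement. Then n·M2(Ḡ) - (n(n-1)/2 - m)·M1(Ḡ) ≥ m·M1(G) - n·M2(G), with equality if and only if G is regular. -/
/-- Degree of a vertex (classical, so it works for any graph on a finite vertex type). -/
noncomputable def gdeg {V : Type*} [Fintype V] (G : SimpleGraph V) (v : V) : ℕ := by
  classical exact G.degree v

/-- First Zagreb index: sum of squares of the vertex degrees. -/
noncomputable def zagrebM1 {V : Type*} [Fintype V] (G : SimpleGraph V) : ℕ :=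
  ∑ v, gdeg G v ^ 2

/-- Second Zagreb index: sum of d(u)·d(v) over the edges uv. -/
noncomputable def zagrebM2 {V : Type*} [Fintype V] (G : SimpleGraph V) : ℕ := by
  classical exact
    ∑ e ∈ G.edgeFinset,
      Sym2.lift ⟨fun u v => gdeg G u * gdeg G v, fun u v => by simp [Nat.mul_comm]⟩ e

/-- The size (number of edges) of a graph. -/
noncomputable def gsize {V : Type*} [Fintype V] (G : SimpleGraph V) : ℕ := by
  classical exact G.edgeFinset.card

/-- A graph is `r`-regular if every vertex has degree `r`. -/
def gregOfDeg {V : Type*} [Fintype V] (G : SimpleGraph V) (r : ℕ) : Prop :=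
  ∀ v, gdeg G v = r

/-- A graph is regular if all its vertices have the same degree. -/
def gregular {V : Type*} [Fintype V] (G : SimpleGraph V) : Prop :=
  ∃ r, gregOfDeg G r

/-!
Write `n` for the order, `m` for the size and `d` for the degree function of `G`. Vertex `v` has
degree `n - 1 - d v` in the complement, and the neighbours of `u` in `Ḡ` are all vertices except
`u` and its neighbours in `G`; expanding, both Zagreb indices of `Ḡ` are polynomials in
`n, m, M1(G), M2(G)`:
`M1(Ḡ) = n(n-1)² - 4m(n-1) + M1(G)` and
`2 M2(Ḡ) = n(n-1)³ - 6m(n-1)² + 4m² + (2n-3) M1(G) - 2 M2(G)`.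
Hence twice the difference of the two sides is `(n - 2)(n M1(G) - 4m²)`. Since `Σ d = 2m`,
Cauchy–Schwarz gives `4m² ≤ n M1(G)`, with equality exactly when all degrees coincide, and the
factor `n - 2` vanishes only when `n = 2`, where every graph is regular.
-/

open Finset

theorem Finset.sum_sum_sub_sq {ι R : Type*} [CommRing R] (s : Finset ι) (f : ι → R) :
    ∑ i ∈ s, ∑ j ∈ s, (f i - f j) ^ 2 = 2 * (#s * ∑ i ∈ s, f i ^ 2 - (∑ i ∈ s, f i) ^ 2) := by
  simp only [sub_sq, sum_add_distrib, sum_sub_distrib, sum_const, nsmul_eq_mul, ← mul_sum,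
    ← sum_mul]
  ring

theorem Finset.sq_sum_eq_card_mul_sum_sq_iff {ι R : Type*} [CommRing R] [LinearOrder R]
    [IsStrictOrderedRing R] (s : Finset ι) (f : ι → R) :
    (∑ i ∈ s, f i) ^ 2 = #s * ∑ i ∈ s, f i ^ 2 ↔ ∀ i ∈ s, ∀ j ∈ s, f i = f j := by
  rw [eq_comm, ← sub_eq_zero, ← mul_right_inj' (two_ne_zero (α := R)), mul_zero,
    ← sum_sum_sub_sq, sum_eq_zero_iff_of_nonneg fun _ _ => sum_nonneg fun _ _ => sq_nonneg _]
  simp only [sum_eq_zero_iff_of_nonneg fun _ _ => sq_nonneg _, sq_eq_zero_iff, sub_eq_zero]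

namespace SimpleGraph

variable {V : Type*} [Fintype V] (G : SimpleGraph V) [DecidableRel G.Adj]

theorem sum_darts_eq_sum_sum_neighborFinset {M : Type*} [AddCommMonoid M] (f : V → V → M) :
    ∑ d : G.Dart, f d.fst d.snd = ∑ u, ∑ v ∈ G.neighborFinset u, f u v := by
  let e : (Σ u, G.neighborSet u) ≃ G.Dart :=
    ⟨fun s => ⟨(s.1, s.2), s.2.2⟩, fun d => ⟨d.fst, d.snd, d.adj⟩, fun _ => rfl, fun _ => rfl⟩
  rw [← e.sum_comp, Fintype.sum_sigma]
  exact sum_congr rfl fun u _ => sum_set_coe (f := f u) (G.neighborSet u)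

theorem sum_darts_eq_two_nsmul_sum_edgeFinset {M : Type*} [AddCommMonoid M]
    [Fintype G.edgeSet] (f : V → V → M) (hf : ∀ u v, f u v = f v u) :
    ∑ d : G.Dart, f d.fst d.snd = 2 • ∑ e ∈ G.edgeFinset, Sym2.lift ⟨f, hf⟩ e := by
  classical
  rw [← sum_fiberwise_of_maps_to (g := Dart.edge) (t := G.edgeFinset)
    fun d _ => G.mem_edgeFinset.2 d.edge_mem, smul_sum]
  refine sum_congr rfl fun e he => ?_
  rw [sum_congr rfl fun d hd =>
      show f d.fst d.snd = Sym2.lift ⟨f, hf⟩ e by rw [← (mem_filter.1 hd).2]; rfl,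
    sum_const, G.dart_edge_fiber_card e (G.mem_edgeFinset.1 he)]

theorem sum_sum_neighborFinset_swap {M : Type*} [AddCommMonoid M] (f : V → V → M) :
    ∑ u, ∑ v ∈ G.neighborFinset u, f v u = ∑ u, ∑ v ∈ G.neighborFinset u, f u v := by
  rw [← sum_darts_eq_sum_sum_neighborFinset, ← sum_darts_eq_sum_sum_neighborFinset]
  exact Fintype.sum_bijective _ Dart.symm_involutive.bijective _ _ fun _ => rfl

theorem sum_sum_neighborFinset_eq_sum_degree_nsmul {M : Type*} [AddCommMonoid M] (g : V → M) :
    ∑ u, ∑ v ∈ G.neighborFinset u, g v = ∑ u, G.degree u • g u := by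
  rw [sum_sum_neighborFinset_swap G fun u _ => g u]
  simp only [sum_const, card_neighborFinset_eq_degree]

theorem sum_neighborFinset_compl [DecidableEq V] {M : Type*} [AddCommGroup M] (g : V → M)
    (u : V) :
    ∑ v ∈ Gᶜ.neighborFinset u, g v = ∑ v, g v - g u - ∑ v ∈ G.neighborFinset u, g v := by
  rw [neighborFinset_compl, sum_sdiff_eq_sub (by simp), sum_singleton,
    ← sum_compl_add_sum (G.neighborFinset u) g]
  abel

theorem sum_mul_sum_neighborFinset_compl [DecidableEq V] {R : Type*} [CommRing R] (g : V → R) :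
    ∑ u, g u * ∑ v ∈ Gᶜ.neighborFinset u, g v
      = (∑ u, g u) ^ 2 - ∑ u, g u ^ 2 - ∑ u, g u * ∑ v ∈ G.neighborFinset u, g v := by
  simp only [sum_neighborFinset_compl, mul_sub, sum_sub_distrib, ← sum_mul, sq]

end SimpleGraph

section Zagreb

variable {V : Type*} [Fintype V] (G : SimpleGraph V)

theorem gdeg_eq_degree [DecidableRel G.Adj] (v : V) : gdeg G v = G.degree v := by
  unfold gdeg; congr!

theorem gsize_eq_card_edgeFinset [Fintype G.edgeSet] : gsize G = #G.edgeFinset := by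
  unfold gsize; congr!

theorem sum_gdeg_eq_two_mul_gsize : ∑ v, (gdeg G v : ℤ) = 2 * gsize G := by
  classical
  simp only [gdeg_eq_degree, gsize_eq_card_edgeFinset]
  exact_mod_cast G.sum_degrees_eq_twice_card_edges

theorem natCast_gdeg_compl (v : V) : (gdeg Gᶜ v : ℤ) = Fintype.card V - 1 - gdeg G v := by
  classical
  have := G.degree_lt_card_verts v
  rw [gdeg_eq_degree, gdeg_eq_degree, G.degree_compl]
  omega

theorem two_mul_zagrebM2_eq_sum_neighborFinset [DecidableRel G.Adj] :
    2 * zagrebM2 G = ∑ u, gdeg G u * ∑ v ∈ G.neighborFinset u, gdeg G v := calc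
  2 * zagrebM2 G = 2 • ∑ e ∈ G.edgeFinset,
      Sym2.lift ⟨fun u v => gdeg G u * gdeg G v, fun u v => Nat.mul_comm _ _⟩ e := by
    rw [smul_eq_mul, zagrebM2]; congr!
  _ = ∑ d : G.Dart, gdeg G d.fst * gdeg G d.snd :=
    (G.sum_darts_eq_two_nsmul_sum_edgeFinset _ _).symm
  _ = _ := by
    simp only [mul_sum]
    exact G.sum_darts_eq_sum_sum_neighborFinset fun u v => gdeg G u * gdeg G v

theorem sum_sum_neighborFinset_gdeg_eq_zagrebM1 [DecidableRel G.Adj] :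
    ∑ u, ∑ v ∈ G.neighborFinset u, gdeg G v = zagrebM1 G := by
  rw [G.sum_sum_neighborFinset_eq_sum_degree_nsmul, zagrebM1]
  simp only [gdeg_eq_degree, smul_eq_mul, sq]

theorem zagrebM1_compl :
    (zagrebM1 Gᶜ : ℤ) = Fintype.card V * (Fintype.card V - 1) ^ 2
      - 4 * (Fintype.card V - 1) * gsize G + zagrebM1 G := by
  have hsq : ∀ v, (gdeg Gᶜ v : ℤ) ^ 2
      = (Fintype.card V - 1) ^ 2 - 2 * (Fintype.card V - 1) * gdeg G v + gdeg G v ^ 2 := by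
    intro v; rw [natCast_gdeg_compl]; ring
  simp only [zagrebM1, Nat.cast_sum, Nat.cast_pow, hsq, sum_add_distrib, sum_sub_distrib,
    ← mul_sum, sum_gdeg_eq_two_mul_gsize, sum_const, card_univ, nsmul_eq_mul]
  ring

theorem sum_sub_gdeg_mul_sum_neighborFinset_sub_gdeg [DecidableRel G.Adj] (c : ℤ) :
    ∑ u, (c - gdeg G u) * ∑ v ∈ G.neighborFinset u, (c - gdeg G v)
      = c ^ 2 * (2 * gsize G) - 2 * c * zagrebM1 G + 2 * zagrebM2 G := by
  have hM1 : ∑ u, ∑ v ∈ G.neighborFinset u, (gdeg G v : ℤ) = zagrebM1 G := by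
    exact_mod_cast sum_sum_neighborFinset_gdeg_eq_zagrebM1 G
  have hM2 : ∑ u, (gdeg G u : ℤ) * ∑ v ∈ G.neighborFinset u, (gdeg G v : ℤ)
      = 2 * zagrebM2 G := by
    exact_mod_cast (two_mul_zagrebM2_eq_sum_neighborFinset G).symm
  have hsq : ∑ u, (gdeg G u : ℤ) ^ 2 = zagrebM1 G := by simp [zagrebM1]
  have hterm : ∀ u, (c - gdeg G u) * ∑ v ∈ G.neighborFinset u, (c - gdeg G v)
      = c ^ 2 * gdeg G u - c * gdeg G u ^ 2 - c * ∑ v ∈ G.neighborFinset u, (gdeg G v : ℤ)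
        + gdeg G u * ∑ v ∈ G.neighborFinset u, (gdeg G v : ℤ) := by
    intro u
    rw [sum_sub_distrib, sum_const, G.card_neighborFinset_eq_degree, ← gdeg_eq_degree,
      nsmul_eq_mul]
    ring
  rw [sum_congr rfl fun u _ => hterm u]
  simp only [sum_add_distrib, sum_sub_distrib, ← mul_sum, sum_gdeg_eq_two_mul_gsize, hsq, hM1, hM2]
  ring

theorem two_mul_zagrebM2_compl :
    2 * (zagrebM2 Gᶜ : ℤ) = Fintype.card V * (Fintype.card V - 1) ^ 3
      - 6 * (Fintype.card V - 1) ^ 2 * gsize G + 4 * gsize G ^ 2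
      + (2 * Fintype.card V - 3) * zagrebM1 G - 2 * zagrebM2 G := by
  classical
  have hM2 : 2 * (zagrebM2 Gᶜ : ℤ)
      = ∑ u, (gdeg Gᶜ u : ℤ) * ∑ v ∈ Gᶜ.neighborFinset u, (gdeg Gᶜ v : ℤ) := by
    exact_mod_cast two_mul_zagrebM2_eq_sum_neighborFinset Gᶜ
  have hM1 : ∑ u, (gdeg Gᶜ u : ℤ) ^ 2 = zagrebM1 Gᶜ := by simp [zagrebM1]
  have hsum : ∑ u, (gdeg Gᶜ u : ℤ) = Fintype.card V * (Fintype.card V - 1) - 2 * gsize G := by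
    simp only [natCast_gdeg_compl, sum_sub_distrib, sum_gdeg_eq_two_mul_gsize, sum_const,
      card_univ, nsmul_eq_mul]
    ring
  rw [hM2, G.sum_mul_sum_neighborFinset_compl, hM1, hsum, zagrebM1_compl]
  simp only [natCast_gdeg_compl, sum_sub_gdeg_mul_sum_neighborFinset_sub_gdeg]
  ring

theorem gregular_iff_forall_gdeg_eq : gregular G ↔ ∀ u v, gdeg G u = gdeg G v := by
  refine ⟨fun ⟨r, hr⟩ u v => (hr u).trans (hr v).symm, fun h => ?_⟩
  rcases isEmpty_or_nonempty V with _ | ⟨⟨v₀⟩⟩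
  · exact ⟨0, isEmptyElim⟩
  · exact ⟨gdeg G v₀, fun v => h v v₀⟩

theorem four_mul_sq_gsize_le : 4 * (gsize G : ℤ) ^ 2 ≤ Fintype.card V * zagrebM1 G := by
  have := sq_sum_le_card_mul_sum_sq (s := univ) (f := fun v => (gdeg G v : ℤ))
  rw [sum_gdeg_eq_two_mul_gsize, card_univ] at this
  push_cast [zagrebM1]
  linarith

theorem four_mul_sq_gsize_eq_iff :
    4 * (gsize G : ℤ) ^ 2 = Fintype.card V * zagrebM1 G ↔ gregular G := by
  have := sq_sum_eq_card_mul_sum_sq_iff univ fun v => (gdeg G v : ℤ)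
  rw [sum_gdeg_eq_two_mul_gsize, card_univ] at this
  push_cast [zagrebM1, gregular_iff_forall_gdeg_eq]
  simpa [mul_pow] using this

theorem gregular_of_card_eq_two (h : Fintype.card V = 2) : gregular G := by
  classical
  obtain ⟨x, y, hxy, huniv⟩ := card_eq_two.1 (card_univ.trans h)
  have hmem : ∀ w, w = x ∨ w = y := fun w => by simpa [huniv] using mem_univ w
  have hlt : ∀ w, gdeg G w < 2 := fun w => h ▸ gdeg_eq_degree G w ▸ G.degree_lt_card_verts w
  have hsum := sum_gdeg_eq_two_mul_gsize G
  rw [huniv, sum_pair hxy] at hsum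
  have hx := hlt x
  have hy := hlt y
  refine (gregular_iff_forall_gdeg_eq G).2 fun u v => ?_
  rcases hmem u with rfl | rfl <;> rcases hmem v with rfl | rfl <;> omega

theorem two_mul_sub_zagreb_compl_eq :
    2 * (((Fintype.card V : ℤ) * zagrebM2 Gᶜ
        - ((Fintype.card V : ℤ) * (Fintype.card V - 1) / 2 - gsize G) * zagrebM1 Gᶜ)
      - ((gsize G : ℤ) * zagrebM1 G - Fintype.card V * zagrebM2 G))
      = (Fintype.card V - 2) * (Fintype.card V * zagrebM1 G - 4 * gsize G ^ 2) := by
  have hhalf := Int.two_mul_ediv_two_of_even (Int.even_mul_pred_self (Fintype.card V))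
  linear_combination (Fintype.card V : ℤ) * two_mul_zagrebM2_compl G - (zagrebM1 Gᶜ : ℤ) * hhalf
    + (2 * gsize G - Fintype.card V * (Fintype.card V - 1) : ℤ) * zagrebM1_compl G

end Zagreb

/-- `n·M2(Ḡ) - (n(n-1)/2 - m)·M1(Ḡ) ≥ m·M1(G) - n·M2(G)`, with
equality if and only if `G` is regular. -/
theorem stmt_2 {V : Type*} [Fintype V] (G : SimpleGraph V) (n m : ℕ)
    (hn : n = Fintype.card V) (hn1 : 1 < n) (hm : m = gsize G) :
    (n : ℤ) * zagrebM2 Gᶜ - ((n : ℤ) * (n - 1) / 2 - m) * zagrebM1 Gᶜ ≥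
      (m : ℤ) * zagrebM1 G - (n : ℤ) * zagrebM2 G ∧
    ((n : ℤ) * zagrebM2 Gᶜ - ((n : ℤ) * (n - 1) / 2 - m) * zagrebM1 Gᶜ =
      (m : ℤ) * zagrebM1 G - (n : ℤ) * zagrebM2 G ↔ gregular G) := by
  subst hn hm
  have key := two_mul_sub_zagreb_compl_eq G
  have hcs := four_mul_sq_gsize_le G
  have hn2 : (2 : ℤ) ≤ Fintype.card V := by exact_mod_cast hn1
  refine ⟨by nlinarith, fun heq => ?_, fun hreg => ?_⟩
  · rw [heq, sub_self, mul_zero, eq_comm, mul_eq_zero, sub_eq_zero, sub_eq_zero] at key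
    rcases key with hcard | hsq
    · exact gregular_of_card_eq_two G (by exact_mod_cast hcard)
    · exact (four_mul_sq_gsize_eq_iff G).1 hsq.symm
  · rw [← (four_mul_sq_gsize_eq_iff G).2 hreg, sub_self, mul_zero, mul_eq_zero] at key
    exact sub_eq_zero.1 (key.resolve_left two_ne_zero)
end

section
/- Let G be an r-regular simple graph of order n > 3 and let e = v_i v_j be an edge not in G joining two distinct vertices. Then the graph G + e obtained by adding the edge e satisfies (nr/2 + 1)·M1(G + e) < n·M2(G + e). (Note that G + e has n vertices and nr/2 + 1 edges.) -/
lemma gdeg_eq' {V : Type*} [Fintype V] (G : SimpleGraph V) [DecidableRel G.Adj] (v : V) :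
    gdeg G v = G.degree v := by
  unfold gdeg SimpleGraph.degree
  congr!

/-- For an `r`-regular graph `G` of order `n > 3` and a non-edge
`e = vᵢvⱼ` joining distinct vertices, the graph `G + e` obtained by adding the
edge satisfies `(nr/2 + 1)·M1(G+e) < n·M2(G+e)`. -/
theorem stmt_7 {V : Type*} [Fintype V] (G : SimpleGraph V) (n r : ℕ)
    (hn : n = Fintype.card V) (hn3 : 3 < n) (hreg : gregOfDeg G r)
    (vi vj : V) (hne : vi ≠ vj) (hnadj : ¬ G.Adj vi vj) :
    (n * r / 2 + 1) * zagrebM1 (G ⊔ SimpleGraph.fromEdgeSet {s(vi, vj)}) <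
      n * zagrebM2 (G ⊔ SimpleGraph.fromEdgeSet {s(vi, vj)}) := by
  classical
  set G' := G ⊔ SimpleGraph.fromEdgeSet {s(vi, vj)} with hG'
  have hreg' : ∀ v, G.degree v = r := fun v => by rw [← gdeg_eq']; exact hreg v
  -- adjacency in G'
  have hadj : ∀ u v, G'.Adj u v ↔ G.Adj u v ∨ (u = vi ∧ v = vj) ∨ (u = vj ∧ v = vi) := by
    intro u v
    simp only [hG', SimpleGraph.sup_adj, SimpleGraph.fromEdgeSet_adj, Set.mem_singleton_iff,
      Sym2.eq_iff]
    constructor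
    · rintro (h | ⟨(⟨rfl, rfl⟩ | ⟨rfl, rfl⟩), _⟩) <;> tauto
    · rintro (h | ⟨rfl, rfl⟩ | ⟨rfl, rfl⟩) <;> simp_all [hne.symm]
  -- degrees in G'
  have hdeg : ∀ v, G'.degree v = if v = vi ∨ v = vj then r + 1 else r := by
    intro v
    rw [← SimpleGraph.card_neighborFinset_eq_degree, SimpleGraph.neighborFinset_eq_filter]
    by_cases hv : v = vi ∨ v = vj
    · rcases hv with rfl | rfl
      · have : Finset.univ.filter (G'.Adj v) = insert vj (Finset.univ.filter (G.Adj v)) := by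
          ext u; simp [hadj, hne]; tauto
        rw [this, Finset.card_insert_of_notMem (by simp [hnadj]),
          ← SimpleGraph.neighborFinset_eq_filter, SimpleGraph.card_neighborFinset_eq_degree,
          hreg']
        simp
      · have : Finset.univ.filter (G'.Adj v) = insert vi (Finset.univ.filter (G.Adj v)) := by
          ext u; simp [hadj, hne.symm]; tauto
        rw [this, Finset.card_insert_of_notMem
            (by simp only [Finset.mem_filter]; exact fun h => hnadj (G.adj_symm h.2)),
          ← SimpleGraph.neighborFinset_eq_filter, SimpleGraph.card_neighborFinset_eq_degree,
          hreg']
        simp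
    · push_neg at hv
      have : Finset.univ.filter (G'.Adj v) = Finset.univ.filter (G.Adj v) := by
        ext u; simp [hadj]; tauto
      rw [this, ← SimpleGraph.neighborFinset_eq_filter,
        SimpleGraph.card_neighborFinset_eq_degree, hreg', if_neg (by tauto)]
  have hdeg' : ∀ v, gdeg G' v = if v = vi ∨ v = vj then r + 1 else r := fun v => by
    rw [gdeg_eq']; exact hdeg v
  -- M1
  have hM1 : zagrebM1 G' = 2 * (r + 1) ^ 2 + (n - 2) * r ^ 2 := by
    unfold zagrebM1
    calc ∑ v, gdeg G' v ^ 2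
        = ∑ v, (if v = vi ∨ v = vj then (r + 1) ^ 2 else r ^ 2) := by
          refine Finset.sum_congr rfl fun v _ => ?_
          rw [hdeg']; split <;> rfl
      _ = 2 * (r + 1) ^ 2 + (n - 2) * r ^ 2 := by
          rw [Finset.sum_ite, Finset.sum_const, Finset.sum_const, smul_eq_mul, smul_eq_mul]
          have h1 : Finset.univ.filter (fun v => v = vi ∨ v = vj) = {vi, vj} := by
            ext u; simp
          have h2 : (Finset.univ.filter (fun v => v = vi ∨ v = vj)).card = 2 := by
            rw [h1]; exact Finset.card_pair hne
          have h4 := Finset.card_filter_add_card_filter_not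
            (s := (Finset.univ : Finset V)) (p := fun v => v = vi ∨ v = vj)
          have h5 : (Finset.univ : Finset V).card = n := by rw [hn]; simp
          have h3 : (Finset.univ.filter (fun v => ¬(v = vi ∨ v = vj))).card = n - 2 := by
            omega
          rw [h2, h3]
  -- edge finset of G'
  have hsne : ¬ (s(vi, vj) : Sym2 V).IsDiag := by simp [hne]
  have hE : G'.edgeFinset = insert s(vi, vj) G.edgeFinset := by
    ext f
    simp only [SimpleGraph.mem_edgeFinset, Finset.mem_insert, hG', SimpleGraph.edgeSet_sup,
      Set.mem_union, SimpleGraph.edgeSet_fromEdgeSet, Set.mem_diff, Set.mem_singleton_iff,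
      Set.mem_setOf_eq]
    constructor
    · rintro (h | ⟨rfl, _⟩) <;> tauto
    · rintro (rfl | h)
      · exact Or.inr ⟨rfl, hsne⟩
      · exact Or.inl h
  have hnot : s(vi, vj) ∉ G.edgeFinset := by simp [hnadj]
  set m := G.edgeFinset.card with hm
  -- M2
  have hM2 : zagrebM2 G' = (r + 1) ^ 2 + (m * r ^ 2 + 2 * r * r) := by
    have h0 : zagrebM2 G' = ∑ e ∈ insert s(vi, vj) G.edgeFinset,
        Sym2.lift ⟨fun u v => gdeg G' u * gdeg G' v, fun u v => by simp [Nat.mul_comm]⟩ e := by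
      unfold zagrebM2
      refine Finset.sum_congr ?_ fun _ _ => rfl
      ext f
      simp only [SimpleGraph.mem_edgeFinset, Finset.mem_insert, hG', SimpleGraph.edgeSet_sup,
        Set.mem_union, SimpleGraph.edgeSet_fromEdgeSet, Set.mem_diff, Set.mem_singleton_iff,
        Set.mem_setOf_eq]
      constructor
      · rintro (h | ⟨rfl, _⟩) <;> tauto
      · rintro (rfl | h)
        · exact Or.inr ⟨rfl, hsne⟩
        · exact Or.inl h
    rw [h0, Finset.sum_insert hnot]
    have key : ∀ f ∈ G.edgeFinset,
        Sym2.lift ⟨fun u v => gdeg G' u * gdeg G' v, fun u v => by simp [Nat.mul_comm]⟩ f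
          = r ^ 2 + (if vi ∈ f ∨ vj ∈ f then r else 0) := by
      intro f hf
      induction f with
      | _ a b =>
        have hab : G.Adj a b := by simpa using hf
        have hl : a ≠ b := hab.ne
        have hav : ¬(a = vi ∧ b = vj) := fun ⟨x1, x2⟩ => hnadj (x1 ▸ x2 ▸ hab)
        have hbv : ¬(a = vj ∧ b = vi) := fun ⟨x1, x2⟩ => hnadj (G.adj_symm (x1 ▸ x2 ▸ hab))
        simp only [Sym2.lift_mk, Sym2.mem_iff]
        rw [hdeg' a, hdeg' b]
        clear hf hab h0 hE hM1 hdeg' hdeg hadj hreg' hreg hnot hsne hnadj hn3 hn hm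
        by_cases h1 : vi = a <;> by_cases h2 : vi = b <;> by_cases h3 : vj = a <;>
          by_cases h4 : vj = b <;> simp_all [eq_comm] <;> ring
    rw [Finset.sum_congr rfl key, Finset.sum_add_distrib, Finset.sum_const, smul_eq_mul,
      ← Finset.sum_filter, Finset.sum_const, smul_eq_mul]
    have hcard : (G.edgeFinset.filter (fun f => vi ∈ f ∨ vj ∈ f)).card = 2 * r := by
      have hu : G.edgeFinset.filter (fun f => vi ∈ f ∨ vj ∈ f)
          = G.incidenceFinset vi ∪ G.incidenceFinset vj := by
        ext f
        simp only [Finset.mem_filter, Finset.mem_union, SimpleGraph.incidenceFinset_eq_filter]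
        tauto
      have hdis : Disjoint (G.incidenceFinset vi) (G.incidenceFinset vj) := by
        rw [Finset.disjoint_left]
        intro f hfi hfj
        rw [SimpleGraph.mem_incidenceFinset] at hfi hfj
        have : f = s(vi, vj) := (Sym2.mem_and_mem_iff hne).mp ⟨hfi.2, hfj.2⟩
        subst this
        exact hnadj (by simpa using hfi.1)
      rw [hu, Finset.card_union_of_disjoint hdis, SimpleGraph.card_incidenceFinset_eq_degree,
        SimpleGraph.card_incidenceFinset_eq_degree, hreg', hreg']
      omega
    rw [hcard]
    have : gdeg G' vi * gdeg G' vj = (r + 1) ^ 2 := by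
      rw [hdeg', hdeg', if_pos (Or.inl rfl), if_pos (Or.inr rfl)]; ring
    simp only [Sym2.lift_mk]
    rw [this]
  -- handshake
  have hhs : n * r = 2 * m := by
    have h := G.sum_degrees_eq_twice_card_edges
    simp only [hreg', Finset.sum_const, smul_eq_mul, Finset.card_univ] at h
    rw [hn]
    simpa [hm] using h
  have hm2 : n * r / 2 = m := by omega
  rw [hM1, hM2, hm2]
  obtain ⟨k, hk⟩ : ∃ k, n = k + 4 := ⟨n - 4, by omega⟩
  have hsub : n - 2 = k + 2 := by omega
  rw [hsub, hk]
  have e1 : 2 * (m * r ^ 2) = (k + 4) * r ^ 3 := by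
    have : 2 * m * r ^ 2 = ((k + 4) * r) * r ^ 2 := by rw [← hk, hhs]
    calc 2 * (m * r ^ 2) = 2 * m * r ^ 2 := by ring
      _ = ((k + 4) * r) * r ^ 2 := this
      _ = (k + 4) * r ^ 3 := by ring
  have e2 : 2 * (m * (r + 1) ^ 2) = (k + 4) * (r * (r + 1) ^ 2) := by
    have : 2 * m * (r + 1) ^ 2 = ((k + 4) * r) * (r + 1) ^ 2 := by rw [← hk, hhs]
    calc 2 * (m * (r + 1) ^ 2) = 2 * m * (r + 1) ^ 2 := by ring
      _ = ((k + 4) * r) * (r + 1) ^ 2 := this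
      _ = (k + 4) * (r * (r + 1) ^ 2) := by ring
  nlinarith [e1, e2, sq_nonneg r, Nat.zero_le k, Nat.zero_le r]
end
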